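/- arXiv:2203.01517 — 3 statements merged into one kernel-verified Lean document; each statement's English description precedes it below -/
import Mathlib

section
/- Suppose for each label y in a finite set Y, the gap between the worst-group loss among groups with label y and the average loss among these groups satisfies L_wg(y) − L_avg(y) ≤ Δ, where Δ ≥ 0, losses are nonnegative, and L_avg = ∑_y q_y L_avg(y) with q_y > 0 summing to 1. Then the overall worst-group loss L_wg = max_y L_wg(y) satisfies L_wg ≤ (min_y q_y)^{-1} L_avg + Δ. -/
theorem stmt10 {Y : Type*} [Fintype Y] [Nonempty Y] (Lwg Lavg q : Y → ℝ) (Δ : ℝ)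
    (hΔ : 0 ≤ Δ) (hgap : ∀ y, Lwg y - Lavg y ≤ Δ)
    (hord : ∀ y, 0 ≤ Lavg y ∧ Lavg y ≤ Lwg y)
    (hq : ∀ y, 0 < q y) (hsum : ∑ y, q y = 1) :
    Finset.univ.sup' Finset.univ_nonempty Lwg ≤
      (Finset.univ.inf' Finset.univ_nonempty q)⁻¹ * (∑ y, q y * Lavg y) + Δ := by
  obtain ⟨y₀, -, hy₀⟩ := Finset.exists_mem_eq_sup' Finset.univ_nonempty Lwg
  rw [hy₀]
  have hmin : 0 < Finset.univ.inf' Finset.univ_nonempty q := by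
    obtain ⟨z, -, hz⟩ := Finset.exists_mem_eq_inf' Finset.univ_nonempty q
    rw [hz]; exact hq z
  have h1 : Finset.univ.inf' Finset.univ_nonempty q * Lavg y₀ ≤ ∑ y, q y * Lavg y := by
    calc Finset.univ.inf' Finset.univ_nonempty q * Lavg y₀
        ≤ q y₀ * Lavg y₀ := by
          exact mul_le_mul_of_nonneg_right (Finset.inf'_le q (Finset.mem_univ y₀)) (hord y₀).1
      _ ≤ ∑ y, q y * Lavg y := by
          apply Finset.single_le_sum (f := fun y => q y * Lavg y) ?_ (Finset.mem_univ y₀)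
          exact fun i _ => mul_nonneg (hq i).le (hord i).1
  have h2 : Lavg y₀ ≤ (Finset.univ.inf' Finset.univ_nonempty q)⁻¹ * (∑ y, q y * Lavg y) := by
    rw [inv_mul_eq_div, le_div_iff₀ hmin]
    linarith
  linarith [hgap y₀]
end

section
/- Let ℓ : ℝ^d × Y → [0, C₂] be C₁-Lipschitz in its first argument, W linear with ‖W‖ ≤ B. Fix label y and groups g₁,…,g_m all with label y, with finite samples G₁,…,G_m, each G_i an i.i.d. sample of size n_i from distribution P_{g_i}, and suppose the pairwise empirical alignment loss max_{i≠j} L_align(G_i, G_j) ≤ α. Then with probability at least 1 − δ, for every pair i ≠ j, the difference of population expected losses satisfies |E_{x∼P_{g_i}} ℓ(W f_enc(x), y) − E_{x∼P_{g_j}} ℓ(W f_enc(x), y)| ≤ B·C₁·α + C₂(√(2 log(m/δ)/n_i) + √(2 log(m/δ)/n_j)). -/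
open MeasureTheory ProbabilityTheory Real

/-!
On the event where every group's empirical risk lies within `C₂ √(2 log (m/δ) / nᵢ)` of its
population risk, two population risks differ by at most the two radii plus the difference of the
empirical risks. That difference is an average over pairs of samples of
`ℓ (W f x) y - ℓ (W f x') y`, so it is at most `B C₁` times the alignment loss. By Hoeffding's
inequality a group misses its radius with probability at most `2 (δ/m)⁴ ≤ δ/m` when `m ≥ 2`, and
a union bound over the groups finishes; for `m ≤ 1` there is no pair of groups.
-/

namespace ProbabilityTheory.HasSubgaussianMGF

variable {Ω : Type*} [MeasurableSpace Ω] {μ : Measure Ω} {X : Ω → ℝ} {c : NNReal}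

lemma measureReal_abs_ge_le (h : HasSubgaussianMGF X c μ) {ε : ℝ} (hε : 0 ≤ ε) :
    μ.real {ω | ε ≤ |X ω|} ≤ 2 * exp (-ε ^ 2 / (2 * c)) := by
  have hset : {ω | ε ≤ |X ω|} = {ω | ε ≤ X ω} ∪ {ω | ε ≤ (-X) ω} := by
    ext ω; simp [le_abs', le_neg, or_comm]
  calc μ.real {ω | ε ≤ |X ω|}
      ≤ μ.real {ω | ε ≤ X ω} + μ.real {ω | ε ≤ (-X) ω} := hset ▸ measureReal_union_le _ _
    _ ≤ exp (-ε ^ 2 / (2 * c)) + exp (-ε ^ 2 / (2 * c)) :=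
      add_le_add (h.measure_ge_le hε) (h.neg.measure_ge_le hε)
    _ = 2 * exp (-ε ^ 2 / (2 * c)) := by ring

end ProbabilityTheory.HasSubgaussianMGF

namespace ProbabilityTheory

variable {Ω : Type*} [MeasurableSpace Ω] {μ : Measure Ω} [IsProbabilityMeasure μ]

theorem measureReal_abs_sum_sub_integral_ge_le {ι : Type*} [Fintype ι]
    {X : ι → Ω → ℝ} (h_indep : iIndepFun X μ) (h_meas : ∀ i, AEMeasurable (X i) μ) {a b : ℝ}
    (hb : ∀ i, ∀ᵐ ω ∂μ, X i ω ∈ Set.Icc a b) {ε : ℝ} (hε : 0 ≤ ε) :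
    μ.real {ω | ε ≤ |∑ i, (X i ω - μ[X i])|} ≤
      2 * exp (-2 * ε ^ 2 / (Fintype.card ι * (b - a) ^ 2)) := by
  have h_centered : iIndepFun (fun i ω => X i ω - μ[X i]) μ := by
    exact h_indep.comp (fun i t => t - μ[X i]) fun i => measurable_id.sub_const _
  have h_sum := HasSubgaussianMGF.sum_of_iIndepFun h_centered (s := Finset.univ)
    (fun i _ => hasSubgaussianMGF_of_mem_Icc (h_meas i) (hb i))
  refine (h_sum.measureReal_abs_ge_le hε).trans_eq ?_
  congr 2
  simp only [Finset.sum_const, Finset.card_univ, nsmul_eq_mul]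
  push_cast
  rw [div_pow, Real.norm_eq_abs, sq_abs,
    show 2 * ((Fintype.card ι : ℝ) * ((b - a) ^ 2 / 2 ^ 2)) = Fintype.card ι * (b - a) ^ 2 / 2
      by ring, div_div_eq_mul_div]
  ring

theorem measureReal_abs_sum_div_sub_ge_le {n : ℕ} (hn : 0 < n)
    {X : Fin n → Ω → ℝ} (h_indep : iIndepFun X μ) (h_meas : ∀ k, AEMeasurable (X k) μ)
    {a b : ℝ} (hb : ∀ k, ∀ᵐ ω ∂μ, X k ω ∈ Set.Icc a b) {c : ℝ} (hc : ∀ k, μ[X k] = c)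
    {ε : ℝ} (hε : 0 ≤ ε) :
    μ.real {ω | ε ≤ |(∑ k, X k ω) / n - c|} ≤ 2 * exp (-2 * n * ε ^ 2 / (b - a) ^ 2) := by
  have hn' : (0 : ℝ) < n := Nat.cast_pos.2 hn
  have hset : {ω | ε ≤ |(∑ k, X k ω) / n - c|} = {ω | n * ε ≤ |∑ k, (X k ω - μ[X k])|} := by
    ext ω
    simp only [Set.mem_ofPred_eq, hc, Finset.sum_sub_distrib, Finset.sum_const, Finset.card_univ,
      Fintype.card_fin, nsmul_eq_mul]
    rw [← mul_le_mul_iff_right₀ hn', ← abs_of_pos hn', ← abs_mul, abs_of_pos hn', mul_sub,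
      mul_div_cancel₀ _ hn'.ne']
  rw [hset]
  refine (measureReal_abs_sum_sub_integral_ge_le h_indep h_meas hb (by positivity)).trans_eq ?_
  rw [Fintype.card_fin]
  field_simp

theorem measureReal_abs_sum_comp_div_sub_integral_ge_le_exp_neg_four_mul {X : Type*}
    [MeasurableSpace X] {P : Measure X} {n : ℕ} (hn : 0 < n) {S : Fin n → Ω → X}
    (hS : ∀ k, Measurable (S k)) (hlaw : ∀ k, μ.map (S k) = P) (h_indep : iIndepFun S μ)
    {φ : X → ℝ} (hφ : Measurable φ) {C : ℝ} (hC : 0 < C) (hφC : ∀ x, φ x ∈ Set.Icc 0 C)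
    {L : ℝ} (hL : 0 ≤ L) :
    μ.real {ω | C * √(2 * L / n) ≤ |(∑ k, φ (S k ω)) / n - ∫ x, φ x ∂P|} ≤
      2 * exp (-(4 * L)) := by
  have h_mean (k : Fin n) : ∫ ω, φ (S k ω) ∂μ = ∫ x, φ x ∂P := by
    rw [← hlaw k, integral_map (hS k).aemeasurable hφ.aestronglyMeasurable]
  have h_indep_φ : iIndepFun (fun k ω => φ (S k ω)) μ := by
    exact h_indep.comp (fun _ => φ) fun _ => hφ
  refine (measureReal_abs_sum_div_sub_ge_le hn h_indep_φ (fun k => (hφ.comp (hS k)).aemeasurable)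
    (fun k => ae_of_all _ fun ω => hφC _) h_mean (by positivity)).trans_eq ?_
  have hn' : (0 : ℝ) < n := Nat.cast_pos.2 hn
  have hC' : C ≠ 0 := hC.ne'
  rw [sub_zero, mul_pow, sq_sqrt (by positivity)]
  field_simp
  ring_nf

theorem ofReal_one_sub_le_prob_compl_iUnion {m : ℕ} (hm : m ≠ 0) {s : Fin m → Set Ω}
    (hs : ∀ i, MeasurableSet (s i)) {δ : ℝ} (h : ∀ i, μ.real (s i) ≤ δ / m) :
    ENNReal.ofReal (1 - δ) ≤ μ (⋃ i, s i)ᶜ := by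
  have h_union : μ.real (⋃ i, s i) ≤ δ :=
    calc μ.real (⋃ i, s i) ≤ ∑ i, μ.real (s i) := measureReal_iUnion_fintype_le _
      _ ≤ ∑ _i : Fin m, δ / m := Finset.sum_le_sum fun i _ => h i
      _ = δ := by
        rw [Finset.sum_const, Finset.card_univ, Fintype.card_fin, nsmul_eq_mul]
        field_simp
  rw [← ofReal_measureReal, probReal_compl_eq_one_sub (MeasurableSet.iUnion hs)]
  exact ENNReal.ofReal_le_ofReal (by linarith)

end ProbabilityTheory

lemma two_mul_exp_neg_four_mul_log_le_inv {x : ℝ} (hx : 2 ≤ x) :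
    2 * exp (-(4 * log x)) ≤ x⁻¹ := by
  have hx0 : 0 < x := by linarith
  have hpow : exp (4 * log x) = x ^ 4 := by
    rw [← exp_log (pow_pos hx0 4), log_pow]
    norm_num
  rw [exp_neg, hpow, ← div_eq_mul_inv, div_le_iff₀ (by positivity),
    show x⁻¹ * x ^ 4 = x ^ 3 by field_simp]
  nlinarith [pow_le_pow_left₀ (by norm_num) hx 3]

lemma abs_sum_div_sub_sum_div_le {E : Type*} [SeminormedAddCommGroup E] {φ : E → ℝ} {K : ℝ}
    (hφ : ∀ u v, |φ u - φ v| ≤ K * ‖u - v‖) {p q : ℕ} (hp : 0 < p) (hq : 0 < q)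
    (u : Fin p → E) (v : Fin q → E) :
    |(∑ k, φ (u k)) / p - (∑ l, φ (v l)) / q| ≤
      K * ((1 / ((p : ℝ) * q)) * ∑ k, ∑ l, ‖u k - v l‖) := by
  have hp' : (0 : ℝ) < p := Nat.cast_pos.2 hp
  have hq' : (0 : ℝ) < q := Nat.cast_pos.2 hq
  have hdiff : (∑ k, φ (u k)) / p - (∑ l, φ (v l)) / q =
      (1 / ((p : ℝ) * q)) * ∑ k, ∑ l, (φ (u k) - φ (v l)) := by
    simp only [Finset.sum_sub_distrib, Finset.sum_const, Finset.card_univ, Fintype.card_fin,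
      nsmul_eq_mul, ← Finset.mul_sum]
    field_simp
  rw [hdiff, abs_mul, abs_of_pos (by positivity), mul_left_comm, Finset.mul_sum]
  gcongr
  refine (Finset.abs_sum_le_sum_abs _ _).trans (Finset.sum_le_sum fun k _ => ?_)
  rw [Finset.mul_sum]
  exact (Finset.abs_sum_le_sum_abs _ _).trans (Finset.sum_le_sum fun l _ => hφ _ _)

lemma abs_sub_le_mul_add_of_abs_sum_div_sub_lt {E : Type*} [SeminormedAddCommGroup E]
    {φ : E → ℝ} {K : ℝ} (hK : 0 ≤ K) (hφ : ∀ u v, |φ u - φ v| ≤ K * ‖u - v‖) {p q : ℕ}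
    (hp : 0 < p) (hq : 0 < q) {u : Fin p → E} {v : Fin q → E} {r s εr εs α : ℝ}
    (hr : |(∑ k, φ (u k)) / p - r| < εr) (hs : |(∑ l, φ (v l)) / q - s| < εs)
    (hα : (1 / ((p : ℝ) * q)) * ∑ k, ∑ l, ‖u k - v l‖ ≤ α) :
    |r - s| ≤ K * α + (εr + εs) := by
  have hemp := (abs_sum_div_sub_sum_div_le hφ hp hq u v).trans (mul_le_mul_of_nonneg_left hα hK)
  rw [abs_lt] at hr hs
  rw [abs_le] at hemp ⊢
  constructor <;> linarith

lemma abs_sub_comp_le_of_opNorm_le {E F : Type*} [SeminormedAddCommGroup E] [NormedSpace ℝ E]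
    [SeminormedAddCommGroup F] [NormedSpace ℝ F] {g : F → ℝ} {C B : ℝ} (hC : 0 ≤ C)
    (hg : ∀ z z', |g z - g z'| ≤ C * ‖z - z'‖) {W : E →L[ℝ] F} (hW : ‖W‖ ≤ B) (u v : E) :
    |g (W u) - g (W v)| ≤ B * C * ‖u - v‖ :=
  calc |g (W u) - g (W v)| ≤ C * ‖W (u - v)‖ := map_sub W u v ▸ hg _ _
    _ ≤ C * (B * ‖u - v‖) := mul_le_mul_of_nonneg_left (W.le_of_opNorm_le hW _) hC
    _ = B * C * ‖u - v‖ := by ring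

theorem stmt15_general {X : Type*} [MeasurableSpace X] {Ω : Type*} [MeasureSpace Ω]
    [IsProbabilityMeasure (ℙ : Measure Ω)]
    {d d' : ℕ} {Y : Type*} (ℓ : EuclideanSpace ℝ (Fin d') → Y → ℝ) (y : Y)
    (C₁ C₂ B α δ : ℝ) (hC₁ : 0 ≤ C₁) (hC₂ : 0 < C₂)
    (hδ : δ ∈ Set.Ioo (0 : ℝ) 1)
    (W : EuclideanSpace ℝ (Fin d) →L[ℝ] EuclideanSpace ℝ (Fin d')) (hW : ‖W‖ ≤ B)
    (hLip : ∀ z z' y', |ℓ z y' - ℓ z' y'| ≤ C₁ * ‖z - z'‖)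
    (hbdd : ∀ z y', ℓ z y' ∈ Set.Icc 0 C₂)
    (f_enc : X → EuclideanSpace ℝ (Fin d)) (hf : Measurable f_enc)
    (m : ℕ) (n : Fin m → ℕ) (hn : ∀ i, 0 < n i)
    (P : Fin m → Measure X)
    (S : ∀ i : Fin m, Fin (n i) → Ω → X) (hSmeas : ∀ i k, Measurable (S i k))
    (hlaw : ∀ i k, Measure.map (S i k) ℙ = P i)
    (hindep : iIndepFun
      (fun pr : Σ i : Fin m, Fin (n i) => S pr.1 pr.2) ℙ) :
    ENNReal.ofReal (1 - δ) ≤ ℙ {ω |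
      (∀ i j : Fin m, i ≠ j →
        (1 / ((n i : ℝ) * n j)) * ∑ k, ∑ l, ‖f_enc (S i k ω) - f_enc (S j l ω)‖ ≤ α) →
      ∀ i j : Fin m, i ≠ j →
        |(∫ x, ℓ (W (f_enc x)) y ∂(P i)) - ∫ x, ℓ (W (f_enc x)) y ∂(P j)| ≤
          B * C₁ * α + C₂ * (Real.sqrt (2 * Real.log (m / δ) / n i) +
            Real.sqrt (2 * Real.log (m / δ) / n j))} := by
  obtain ⟨hδ0, hδ1⟩ := hδ
  rcases le_or_gt m 1 with hm | hm
  · refine (ENNReal.ofReal_le_one.2 (by linarith)).trans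
      (measure_univ.symm.le.trans (measure_mono fun ω _ => ?_))
    intro _ i j hij
    exact absurd (Fin.ext (by omega)) hij
  have hLipW := abs_sub_comp_le_of_opNorm_le hC₁ (fun z z' => hLip z z' y) hW
  have hloss_meas : Measurable fun x => ℓ (W (f_enc x)) y :=
    (LipschitzWith.of_dist_le' (f := fun u => ℓ (W u) y) fun u v => by
      simpa only [dist_eq_norm, Real.norm_eq_abs] using hLipW u v).continuous.measurable.comp hf
  have hmδ : 2 ≤ (m : ℝ) / δ := by
    rw [le_div_iff₀ hδ0]
    nlinarith [show (2 : ℝ) ≤ m by exact_mod_cast hm]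
  set bad : Fin m → Set Ω := fun i => {ω | C₂ * √(2 * log (m / δ) / n i) ≤
    |(∑ k, ℓ (W (f_enc (S i k ω))) y) / n i - ∫ x, ℓ (W (f_enc x)) y ∂(P i)|}
  have hbad (i : Fin m) : (ℙ : Measure Ω).real (bad i) ≤ δ / m := by
    refine (measureReal_abs_sum_comp_div_sub_integral_ge_le_exp_neg_four_mul (hn i) (hSmeas i)
      (hlaw i) (hindep.precomp (g := Sigma.mk i) sigma_mk_injective) hloss_meas hC₂ (fun x => hbdd _ y)
      (log_nonneg (by linarith))).trans ?_
    simpa only [inv_div] using two_mul_exp_neg_four_mul_log_le_inv hmδ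
  have hbad_meas (i : Fin m) : MeasurableSet (bad i) :=
    measurableSet_le measurable_const
      (((Finset.measurable_sum _ fun k _ => hloss_meas.comp (hSmeas i k)).div_const _).sub_const _).abs
  refine (ofReal_one_sub_le_prob_compl_iUnion (by omega) hbad_meas hbad).trans
    (measure_mono fun ω hω => ?_)
  intro halign i j hij
  simp only [Set.mem_compl_iff, Set.mem_iUnion, not_exists, bad, Set.mem_ofPred_eq, not_le] at hω
  rw [mul_add]
  exact abs_sub_le_mul_add_of_abs_sum_div_sub_lt (mul_nonneg ((norm_nonneg W).trans hW) hC₁)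
    hLipW (hn i) (hn j) (hω i) (hω j) (halign i j hij)

theorem stmt15 {X : Type*} [MeasurableSpace X] {Ω : Type*} [MeasureSpace Ω]
    [IsProbabilityMeasure (ℙ : Measure Ω)]
    {d d' : ℕ} {Y : Type*} (ℓ : EuclideanSpace ℝ (Fin d') → Y → ℝ) (y : Y)
    (C₁ C₂ B α δ : ℝ) (hC₁ : 0 ≤ C₁) (hC₂ : 0 < C₂) (hα : 0 ≤ α)
    (hδ : δ ∈ Set.Ioo (0 : ℝ) 1)
    (W : EuclideanSpace ℝ (Fin d) →L[ℝ] EuclideanSpace ℝ (Fin d')) (hW : ‖W‖ ≤ B)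
    (hLip : ∀ z z' y', |ℓ z y' - ℓ z' y'| ≤ C₁ * ‖z - z'‖)
    (hbdd : ∀ z y', ℓ z y' ∈ Set.Icc 0 C₂)
    (f_enc : X → EuclideanSpace ℝ (Fin d)) (hf : Measurable f_enc)
    (m : ℕ) (n : Fin m → ℕ) (hn : ∀ i, 0 < n i)
    (P : Fin m → Measure X) (hP : ∀ i, IsProbabilityMeasure (P i))
    (S : ∀ i : Fin m, Fin (n i) → Ω → X) (hSmeas : ∀ i k, Measurable (S i k))
    (hlaw : ∀ i k, Measure.map (S i k) ℙ = P i)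
    (hindep : iIndepFun
      (fun pr : Σ i : Fin m, Fin (n i) => S pr.1 pr.2) ℙ) :
    ENNReal.ofReal (1 - δ) ≤ ℙ {ω |
      (∀ i j : Fin m, i ≠ j →
        (1 / ((n i : ℝ) * n j)) * ∑ k, ∑ l, ‖f_enc (S i k ω) - f_enc (S j l ω)‖ ≤ α) →
      ∀ i j : Fin m, i ≠ j →
        |(∫ x, ℓ (W (f_enc x)) y ∂(P i)) - ∫ x, ℓ (W (f_enc x)) y ∂(P j)| ≤
          B * C₁ * α + C₂ * (Real.sqrt (2 * Real.log (m / δ) / n i) +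
            Real.sqrt (2 * Real.log (m / δ) / n j))} :=
  stmt15_general ℓ y C₁ C₂ B α δ hC₁ hC₂ hδ W hW hLip hbdd f_enc hf m n hn P S hSmeas hlaw hindep
end

section
/- In the setting of Theorem 1, if additionally the average loss among groups with label y satisfies L_avg(f; y) ≤ ε, then with probability at least 1 − δ the worst-group loss among groups with label y satisfies L_wg(f; y) ≤ ε + B·C₁·L̂_align(f; y) + max_{g∈G_y} C₂√(8 log(|G_y|/δ)/n_g). -/
/-!
Hoeffding's inequality within each group, combined with a union bound over the `m` groups,
shows that with probability at least `1 - δ` the empirical loss of every group `g` lies within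
`C₂ rᵍ / 2` of its population loss `Lᵍ`, where `rᵍ = √(8 log(m/δ) / nᵍ)`. On that event,
since `ℓ(W ·, y)` is `B C₁`-Lipschitz in the encoding, the empirical losses of two groups differ
by at most `B C₁` times the mean cross-group distance of their encodings, hence by at most
`B C₁ L̂_align`. Averaging over the groups with the weights `q` compares every `Lᵍ` with the
class average, which is at most `ε`.
-/

open MeasureTheory ProbabilityTheory Finset
open scoped BigOperators

lemma measureReal_sum_sub_integral_ge_le {Ω ι : Type*} [MeasurableSpace Ω] {μ : Measure Ω}
    [IsProbabilityMeasure μ] {X : ι → Ω → ℝ} (hindep : iIndepFun X μ)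
    (hmeas : ∀ i, Measurable (X i)) {a b : ℝ} (hX : ∀ i ω, X i ω ∈ Set.Icc a b)
    (s : Finset ι) {t : ℝ} (ht : 0 ≤ t) :
    μ.real {ω | t ≤ ∑ i ∈ s, (X i ω - μ[X i])} ≤ Real.exp (-2 * t ^ 2 / (#s * (b - a) ^ 2)) := by
  have hcent : iIndepFun (fun i ω ↦ X i ω - μ[X i]) μ :=
    (hindep.comp (fun i x ↦ x - μ[X i]) fun _ ↦ measurable_id.sub_const _ :)
  have hsubG : ∀ i ∈ s, HasSubgaussianMGF (fun ω ↦ X i ω - μ[X i]) ((‖b - a‖₊ / 2) ^ 2) μ :=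
    fun i _ ↦ hasSubgaussianMGF_of_mem_Icc (hmeas i).aemeasurable (ae_of_all _ (hX i))
  refine (HasSubgaussianMGF.measure_sum_ge_le_of_iIndepFun hcent hsubG ht).trans_eq ?_
  congr 1
  simp only [sum_const, nsmul_eq_mul, NNReal.coe_mul, NNReal.coe_natCast, NNReal.coe_pow,
    NNReal.coe_div, coe_nnnorm, Real.norm_eq_abs, NNReal.coe_ofNat, div_pow, sq_abs]
  generalize (b - a) ^ 2 = v
  ring

lemma measureReal_abs_expect_sub_ge_le {Ω ι : Type*} [MeasurableSpace Ω] {μ : Measure Ω}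
    [IsProbabilityMeasure μ] [Fintype ι] [Nonempty ι] {X : ι → Ω → ℝ} (hindep : iIndepFun X μ)
    (hmeas : ∀ i, Measurable (X i)) {a b m : ℝ} (hX : ∀ i ω, X i ω ∈ Set.Icc a b)
    (hmean : ∀ i, μ[X i] = m) {t : ℝ} (ht : 0 ≤ t) :
    μ.real {ω | t ≤ |𝔼 i, X i ω - m|} ≤
      2 * Real.exp (-2 * Fintype.card ι * t ^ 2 / (b - a) ^ 2) := by
  have hn : 0 < (Fintype.card ι : ℝ) := by simp [Fintype.card_pos]
  have hupper := measureReal_sum_sub_integral_ge_le hindep hmeas hX univ (mul_nonneg hn.le ht)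
  have hlower := measureReal_sum_sub_integral_ge_le (X := fun i ω ↦ -X i ω)
    (hindep.comp (fun _ x ↦ -x) fun _ ↦ measurable_neg) (fun i ↦ (hmeas i).neg)
    (a := -b) (b := -a) (fun i ω ↦ by simpa [and_comm] using hX i ω) univ (mul_nonneg hn.le ht)
  simp only [integral_neg, hmean, card_univ, ← neg_add', ← sub_eq_add_neg, neg_sub] at hupper hlower
  set n : ℝ := (Fintype.card ι : ℝ)
  have hexponent : -2 * (n * t) ^ 2 / (n * (b - a) ^ 2) = -2 * n * t ^ 2 / (b - a) ^ 2 := by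
    rw [show -2 * (n * t) ^ 2 = n * (-2 * n * t ^ 2) by ring, mul_div_mul_left _ _ hn.ne']
  rw [hexponent] at hupper hlower
  have hsplit : {ω | t ≤ |𝔼 i, X i ω - m|} ⊆
      {ω | n * t ≤ ∑ i, (X i ω - m)} ∪ {ω | n * t ≤ ∑ i, (m - X i ω)} := by
    intro ω hω
    have hsum : ∑ i, (X i ω - m) = n * (𝔼 i, X i ω - m) := by
      rw [Fintype.expect_eq_sum_div_card, sum_sub_distrib, sum_const, card_univ, nsmul_eq_mul,
        mul_sub, mul_div_cancel₀ _ hn.ne']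
    have hsum' : ∑ i, (m - X i ω) = n * -(𝔼 i, X i ω - m) := by
      rw [mul_neg, ← hsum, ← sum_neg_distrib]
      simp only [neg_sub]
    simp only [Set.mem_ofPred_eq, Set.mem_union, hsum, hsum'] at hω ⊢
    rcases le_abs'.1 hω with h | h
    · exact Or.inr (mul_le_mul_of_nonneg_left (by linarith) hn.le)
    · exact Or.inl (mul_le_mul_of_nonneg_left h hn.le)
  calc μ.real {ω | t ≤ |𝔼 i, X i ω - m|}
      ≤ μ.real {ω | n * t ≤ ∑ i, (X i ω - m)} + μ.real {ω | n * t ≤ ∑ i, (m - X i ω)} :=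
        (measureReal_mono hsplit).trans (measureReal_union_le _ _)
    _ ≤ 2 * Real.exp (-2 * n * t ^ 2 / (b - a) ^ 2) := by linarith

lemma exp_neg_two_mul_sq_sqrt_log_eq_inv_pow {n : ℕ} (hn : 0 < n) {C x : ℝ} (hC : C ≠ 0)
    (hx : 1 ≤ x) :
    Real.exp (-2 * n * (C * √(8 * Real.log x / n) / 2) ^ 2 / C ^ 2) = (x ^ 4)⁻¹ := by
  have hlog : 0 ≤ 8 * Real.log x / n := by have := Real.log_nonneg hx; positivity
  have hexponent : -2 * n * (C * √(8 * Real.log x / n) / 2) ^ 2 / C ^ 2 = -Real.log (x ^ 4) := by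
    rw [mul_div_assoc, div_pow, mul_pow, Real.sq_sqrt hlog, Real.log_pow]
    field_simp
    ring
  rw [hexponent, Real.exp_neg, Real.exp_log (by positivity)]

lemma measureReal_iUnion_abs_expect_sub_integral_ge_le {Ω X : Type*} [MeasurableSpace Ω]
    [MeasurableSpace X] {μ : Measure Ω} [IsProbabilityMeasure μ] {m : ℕ} (hm : 2 ≤ m)
    {n : Fin m → ℕ} (hn : ∀ g, 0 < n g) {P : Fin m → Measure X} {S : ∀ g, Fin (n g) → Ω → X}
    (hSmeas : ∀ g k, Measurable (S g k)) (hlaw : ∀ g k, μ.map (S g k) = P g)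
    (hindep : iIndepFun (fun p : Σ g, Fin (n g) ↦ S p.1 p.2) μ) {φ : X → ℝ} (hφm : Measurable φ)
    {C : ℝ} (hC : 0 < C) (hφ : ∀ x, φ x ∈ Set.Icc 0 C) {δ : ℝ} (hδ0 : 0 < δ) (hδ1 : δ < 1) :
    μ.real (⋃ g, {ω | C * √(8 * Real.log (m / δ) / n g) / 2 ≤
      |𝔼 k, φ (S g k ω) - ∫ x, φ x ∂P g|}) ≤ δ := by
  have hm' : (2 : ℝ) ≤ m := by exact_mod_cast hm
  have hgroup : ∀ g, μ.real {ω | C * √(8 * Real.log (m / δ) / n g) / 2 ≤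
      |𝔼 k, φ (S g k ω) - ∫ x, φ x ∂P g|} ≤ 2 * ((m / δ) ^ 4)⁻¹ := by
    intro g
    have : Nonempty (Fin (n g)) := ⟨⟨0, hn g⟩⟩
    have hindep_g : iIndepFun (fun k ω ↦ φ (S g k ω)) μ :=
      (hindep.precomp sigma_mk_injective).comp (fun _ ↦ φ) fun _ ↦ hφm
    have hmean : ∀ k, μ[fun ω ↦ φ (S g k ω)] = ∫ x, φ x ∂P g := fun k ↦ by
      rw [← hlaw g k, integral_map (hSmeas g k).aemeasurable hφm.aestronglyMeasurable]
    refine (measureReal_abs_expect_sub_ge_le hindep_g (fun k ↦ hφm.comp (hSmeas g k))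
      (fun k ω ↦ hφ _) hmean (by positivity)).trans_eq ?_
    rw [Fintype.card_fin, sub_zero,
      exp_neg_two_mul_sq_sqrt_log_eq_inv_pow (hn g) hC.ne' ((one_le_div hδ0).2 (by linarith))]
  calc _ ≤ ∑ g, μ.real {ω | C * √(8 * Real.log (m / δ) / n g) / 2 ≤
          |𝔼 k, φ (S g k ω) - ∫ x, φ x ∂P g|} := measureReal_iUnion_fintype_le _
    _ ≤ ∑ _g : Fin m, 2 * ((m / δ) ^ 4)⁻¹ := sum_le_sum fun g _ ↦ hgroup g
    _ ≤ δ := by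
      rw [sum_const, card_univ, Fintype.card_fin, nsmul_eq_mul, div_pow, inv_div,
        ← mul_assoc, mul_div_assoc', div_le_iff₀ (by positivity)]
      have hcube : 2 * δ ^ 3 ≤ (m : ℝ) ^ 3 := by
        nlinarith [pow_le_one₀ hδ0.le hδ1.le (n := 3), pow_le_pow_left₀ (by norm_num) hm' 3]
      nlinarith [mul_le_mul_of_nonneg_left hcube (by positivity : (0 : ℝ) ≤ δ * m)]

lemma expect_sub_expect_le_mul_expect_norm_sub {α E ι κ : Type*} [SeminormedAddCommGroup E]
    [Fintype ι] [Fintype κ] [Nonempty ι] [Nonempty κ] {φ : α → ℝ} {e : α → E} {K : ℝ}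
    (hφ : ∀ x x', φ x - φ x' ≤ K * ‖e x - e x'‖) (u : ι → α) (v : κ → α) :
    𝔼 i, φ (u i) - 𝔼 j, φ (v j) ≤ K * 𝔼 i, 𝔼 j, ‖e (u i) - e (v j)‖ := by
  calc 𝔼 i, φ (u i) - 𝔼 j, φ (v j) = 𝔼 i, 𝔼 j, (φ (u i) - φ (v j)) := by
        simp only [expect_sub_distrib, Fintype.expect_const]
    _ ≤ 𝔼 i, 𝔼 j, K * ‖e (u i) - e (v j)‖ :=
        expect_le_expect fun i _ ↦ expect_le_expect fun j _ ↦ hφ _ _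
    _ = K * 𝔼 i, 𝔼 j, ‖e (u i) - e (v j)‖ := by simp only [mul_expect]

lemma expect_expect_eq_one_div_mul_sum_sum {ι κ : Type*} [Fintype ι] [Fintype κ] (f : ι → κ → ℝ) :
    𝔼 i, 𝔼 j, f i j = 1 / (Fintype.card ι * Fintype.card κ) * ∑ i, ∑ j, f i j := by
  simp only [Fintype.expect_eq_sum_div_card, ← sum_div, div_div, one_div_mul_eq_div, mul_comm]

lemma expect_le_expect_add_mul_sup'_offDiag {α E ι : Type*} [SeminormedAddCommGroup E]
    [Fintype ι] {n : ι → ℕ} (hn : ∀ g, 0 < n g) {φ : α → ℝ} {e : α → E} {K : ℝ} (hK : 0 ≤ K)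
    (hφ : ∀ x x', φ x - φ x' ≤ K * ‖e x - e x'‖) (u : ∀ g, Fin (n g) → α)
    (H : (univ : Finset ι).offDiag.Nonempty) (g g' : ι) :
    𝔼 k, φ (u g k) ≤ 𝔼 l, φ (u g' l) + K * (univ : Finset ι).offDiag.sup' H
      (fun pr ↦ 1 / ((n pr.1 : ℝ) * n pr.2) * ∑ k, ∑ l, ‖e (u pr.1 k) - e (u pr.2 l)‖) := by
  set A := (univ : Finset ι).offDiag.sup' H
    (fun pr ↦ 1 / ((n pr.1 : ℝ) * n pr.2) * ∑ k, ∑ l, ‖e (u pr.1 k) - e (u pr.2 l)‖)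
  rcases eq_or_ne g g' with rfl | hgg'
  · have hA : 0 ≤ A := le_sup'_of_le _ H.choose_spec (by positivity)
    linarith [mul_nonneg hK hA]
  have : Nonempty (Fin (n g)) := ⟨⟨0, hn g⟩⟩
  have : Nonempty (Fin (n g')) := ⟨⟨0, hn g'⟩⟩
  have halign := expect_sub_expect_le_mul_expect_norm_sub hφ (u g) (u g')
  rw [expect_expect_eq_one_div_mul_sum_sum, Fintype.card_fin, Fintype.card_fin] at halign
  have hle : 1 / ((n g : ℝ) * n g') * ∑ k, ∑ l, ‖e (u g k) - e (u g' l)‖ ≤ A :=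
    le_sup'_of_le _ (b := (g, g')) (by simpa using hgg') le_rfl
  linarith [mul_le_mul_of_nonneg_left hle hK]

lemma le_add_add_two_mul_of_weighted_sum_le {ι : Type*} [Fintype ι] {q L M : ι → ℝ} {ε A e : ℝ}
    (hq : ∀ i, 0 ≤ q i) (hqsum : ∑ i, q i = 1) (havg : ∑ i, q i * L i ≤ ε)
    (hdev : ∀ i, |M i - L i| ≤ e) (hM : ∀ i j, M i ≤ M j + A) (g : ι) :
    L g ≤ ε + A + 2 * e := by
  calc L g ≤ ∑ j, q j * M g + e := by
        rw [← sum_mul, hqsum, one_mul]; linarith [(abs_le.1 (hdev g)).1]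
    _ ≤ ∑ j, q j * (L j + e + A) + e := by
        gcongr with j
        · exact hq j
        · linarith [hM g j, (abs_le.1 (hdev j)).2]
    _ = ∑ j, q j * L j + (e + A) + e := by
        simp only [add_assoc, mul_add, sum_add_distrib, ← sum_mul, hqsum, one_mul]
    _ ≤ ε + A + 2 * e := by linarith

lemma comp_clm_sub_comp_clm_le {E F : Type*} [SeminormedAddCommGroup E]
    [NormedSpace ℝ E] [SeminormedAddCommGroup F] [NormedSpace ℝ F] {ψ : F → ℝ} {C B : ℝ}
    (hC : 0 ≤ C) (hψ : ∀ z z', |ψ z - ψ z'| ≤ C * ‖z - z'‖) {W : E →L[ℝ] F} (hW : ‖W‖ ≤ B)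
    (z z' : E) : ψ (W z) - ψ (W z') ≤ B * C * ‖z - z'‖ :=
  calc ψ (W z) - ψ (W z') ≤ C * ‖W z - W z'‖ := (le_abs_self _).trans (hψ _ _)
    _ = C * ‖W (z - z')‖ := by rw [map_sub]
    _ ≤ C * (B * ‖z - z'‖) := by gcongr; exact W.le_of_opNorm_le hW _
    _ = B * C * ‖z - z'‖ := by ring

lemma ofReal_one_sub_le_of_compl_subset {Ω : Type*} [MeasurableSpace Ω] {μ : Measure Ω}
    [IsProbabilityMeasure μ] {s t : Set Ω} {δ : ℝ} (ht : μ.real t ≤ δ) (hts : tᶜ ⊆ s) :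
    ENNReal.ofReal (1 - δ) ≤ μ s := by
  have hcover : 1 ≤ μ.real s + μ.real t := by
    rw [← probReal_univ (μ := μ), ← Set.compl_subset_iff_union.1 hts, Set.union_comm]
    exact measureReal_union_le _ _
  rw [← ofReal_measureReal]
  exact ENNReal.ofReal_le_ofReal (by linarith)

theorem stmt18 {X : Type*} [MeasurableSpace X] {Ω : Type*} [MeasureSpace Ω]
    [IsProbabilityMeasure (ℙ : Measure Ω)]
    {d d' : ℕ} {Y : Type*} (ℓ : EuclideanSpace ℝ (Fin d') → Y → ℝ) (y : Y)
    (C₁ C₂ B ε δ : ℝ) (hC₁ : 0 ≤ C₁) (hC₂ : 0 < C₂)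
    (hδ : δ ∈ Set.Ioo (0 : ℝ) 1)
    (W : EuclideanSpace ℝ (Fin d) →L[ℝ] EuclideanSpace ℝ (Fin d')) (hW : ‖W‖ ≤ B)
    (hLip : ∀ z z' y', |ℓ z y' - ℓ z' y'| ≤ C₁ * ‖z - z'‖)
    (hbdd : ∀ z y', ℓ z y' ∈ Set.Icc 0 C₂)
    (f_enc : X → EuclideanSpace ℝ (Fin d)) (hf : Measurable f_enc)
    (m : ℕ) (hm : 2 ≤ m) (n : Fin m → ℕ) (hn : ∀ i, 0 < n i)
    (q : Fin m → ℝ) (hq : ∀ i, 0 < q i) (hqsum : ∑ i, q i = 1)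
    (P : Fin m → Measure X)
    (S : ∀ i : Fin m, Fin (n i) → Ω → X) (hSmeas : ∀ i k, Measurable (S i k))
    (hlaw : ∀ i k, Measure.map (S i k) ℙ = P i)
    (hindep : iIndepFun
      (fun pr : Σ i : Fin m, Fin (n i) => S pr.1 pr.2) ℙ)
    (havg : ∑ i, q i * ∫ x, ℓ (W (f_enc x)) y ∂(P i) ≤ ε) :
    ENNReal.ofReal (1 - δ) ≤ ℙ {ω |
      Finset.univ.sup' ⟨⟨0, by omega⟩, Finset.mem_univ _⟩
          (fun i : Fin m => ∫ x, ℓ (W (f_enc x)) y ∂(P i)) ≤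
        ε + B * C₁ *
          ((Finset.univ : Finset (Fin m)).offDiag.sup'
            ⟨(⟨0, by omega⟩, ⟨1, by omega⟩), Finset.mem_offDiag.mpr
              ⟨Finset.mem_univ _, Finset.mem_univ _, Fin.ne_of_val_ne Nat.zero_ne_one⟩⟩
            (fun pr =>
              (1 / ((n pr.1 : ℝ) * n pr.2)) *
                ∑ k, ∑ l, ‖f_enc (S pr.1 k ω) - f_enc (S pr.2 l ω)‖)) +
        Finset.univ.sup' ⟨⟨0, by omega⟩, Finset.mem_univ _⟩
          (fun g : Fin m => C₂ * Real.sqrt (8 * Real.log (m / δ) / n g))} := by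
  obtain ⟨hδ0, hδ1⟩ := hδ
  have hB : 0 ≤ B := (norm_nonneg W).trans hW
  set φ : X → ℝ := fun x ↦ ℓ (W (f_enc x)) y
  have hφ : ∀ x x', φ x - φ x' ≤ B * C₁ * ‖f_enc x - f_enc x'‖ := fun x x' ↦
    comp_clm_sub_comp_clm_le hC₁ (fun z z' ↦ hLip z z' y) hW _ _
  have hℓ : Continuous (ℓ · y) := (LipschitzWith.of_dist_le_mul (K := C₁.toNNReal) fun z z' ↦ by
    simpa [Real.dist_eq, dist_eq_norm, hC₁] using hLip z z' y).continuous
  have hφm : Measurable φ := hℓ.measurable.comp (W.continuous.measurable.comp hf)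
  refine ofReal_one_sub_le_of_compl_subset (measureReal_iUnion_abs_expect_sub_integral_ge_le hm
    hn hSmeas hlaw hindep hφm hC₂ (fun x ↦ hbdd _ y) hδ0 hδ1) fun ω hω ↦ ?_
  simp only [Set.mem_compl_iff, Set.mem_iUnion, not_exists, not_le, Set.mem_ofPred_eq] at hω
  have hdev : ∀ g, |𝔼 k, φ (S g k ω) - ∫ x, φ x ∂P g| ≤ univ.sup' ⟨⟨0, by omega⟩, mem_univ _⟩
      (fun g : Fin m ↦ C₂ * Real.sqrt (8 * Real.log (m / δ) / n g)) / 2 := fun g ↦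
    (hω g).le.trans (div_le_div_of_nonneg_right (le_sup'_of_le _ (mem_univ g) le_rfl) zero_le_two)
  refine Set.mem_ofPred.2 (sup'_le _ _ fun g _ ↦ ?_)
  linarith [le_add_add_two_mul_of_weighted_sum_le (fun i ↦ (hq i).le) hqsum havg hdev
    (expect_le_expect_add_mul_sup'_offDiag hn (mul_nonneg hB hC₁) hφ (S · · ω)
      ⟨(⟨0, by omega⟩, ⟨1, by omega⟩), by simp [Fin.ext_iff]⟩) g]
end
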